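/- Cancellation of the pseudoinverse against the reachability Gramian: for every k ∈ {0,…,N−1}, B_kB_kᵀΦ(N,k+1)ᵀG_r(N,k)†G_r(N,k) = B_kB_kᵀΦ(N,k+1)ᵀ, where G_r(N,k)† is the Moore–Penrose inverse of G_r(N,k). -/
import Mathlib


open Matrix

noncomputable section

/-- `prodAux A l d = A (l+d-1) * ⋯ * A l` (the empty product for `d = 0`). -/
def prodAux {n : ℕ} (A : ℕ → Matrix (Fin n) (Fin n) ℝ) (l : ℕ) :
    ℕ → Matrix (Fin n) (Fin n) ℝ
  | 0 => 1
  | d + 1 => A (l + d) * prodAux A l d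

/-- State-transition matrix `Φ(k,l)`: `A_{k-1} ⋯ A_l` for `k > l`, `I` for `k = l`,
and `A_k⁻¹ ⋯ A_{l-1}⁻¹` for `k < l`. -/
def Phi {n : ℕ} (A : ℕ → Matrix (Fin n) (Fin n) ℝ) (k l : ℕ) :
    Matrix (Fin n) (Fin n) ℝ :=
  if l ≤ k then prodAux A l (k - l) else (prodAux A k (l - k))⁻¹

/-- Reachability Gramian `G_r(k₁,k₀) = Σ_{k=k₀}^{k₁−1} Φ(k₁,k+1) B_k B_kᵀ Φ(k₁,k+1)ᵀ`. -/
def Gr {n m : ℕ} (A : ℕ → Matrix (Fin n) (Fin n) ℝ) (B : ℕ → Matrix (Fin n) (Fin m) ℝ)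
    (k₁ k₀ : ℕ) : Matrix (Fin n) (Fin n) ℝ :=
  ∑ k ∈ Finset.Ico k₀ k₁, Phi A k₁ (k+1) * B k * (B k)ᵀ * (Phi A k₁ (k+1))ᵀ

/-- Controllability Gramian `G_c(k₁,k₀) = Σ_{k=k₀}^{k₁−1} Φ(k₀,k+1) B_k B_kᵀ Φ(k₀,k+1)ᵀ`. -/
def Gc {n m : ℕ} (A : ℕ → Matrix (Fin n) (Fin n) ℝ) (B : ℕ → Matrix (Fin n) (Fin m) ℝ)
    (k₁ k₀ : ℕ) : Matrix (Fin n) (Fin n) ℝ :=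
  ∑ k ∈ Finset.Ico k₀ k₁, Phi A k₀ (k+1) * B k * (B k)ᵀ * (Phi A k₀ (k+1))ᵀ

/-- `H` is the Moore–Penrose inverse of `G`. -/
def IsMoorePenrose {n : ℕ} (G H : Matrix (Fin n) (Fin n) ℝ) : Prop :=
  G * H * G = G ∧ H * G * H = H ∧ (G * H)ᵀ = G * H ∧ (H * G)ᵀ = H * G

lemma trace_mul_transpose_self_nonneg {n m : ℕ} (X : Matrix (Fin n) (Fin m) ℝ) :
    0 ≤ (X * Xᵀ).trace := by
  simp only [trace, diag, mul_apply, transpose_apply]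
  exact Finset.sum_nonneg fun i _ => Finset.sum_nonneg fun j _ => mul_self_nonneg _

lemma eq_zero_of_trace_mul_transpose {n m : ℕ} (X : Matrix (Fin n) (Fin m) ℝ)
    (h : (X * Xᵀ).trace = 0) : X = 0 := by
  ext i j
  simp only [trace, diag, mul_apply, transpose_apply] at h
  have h1 := (Finset.sum_eq_zero_iff_of_nonneg
    (fun i _ => Finset.sum_nonneg fun j _ => mul_self_nonneg (X i j))).mp h i (Finset.mem_univ i)
  have h2 := (Finset.sum_eq_zero_iff_of_nonneg
    (fun j _ => mul_self_nonneg (X i j))).mp h1 j (Finset.mem_univ j)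
  simpa [mul_self_eq_zero] using h2

lemma sum_mul_transpose_eq_zero {n m : ℕ} (s : Finset ℕ)
    (f : ℕ → Matrix (Fin n) (Fin m) ℝ)
    (h : ∑ j ∈ s, f j * (f j)ᵀ = 0) : ∀ j ∈ s, f j = 0 := by
  intro j hj
  have htr : ∑ j ∈ s, (f j * (f j)ᵀ).trace = 0 := by
    rw [← trace_sum, h, trace_zero]
  have := (Finset.sum_eq_zero_iff_of_nonneg
    (fun j _ => trace_mul_transpose_self_nonneg (f j))).mp htr j hj
  exact eq_zero_of_trace_mul_transpose _ this

lemma Gr_transpose {n m : ℕ} (A : ℕ → Matrix (Fin n) (Fin n) ℝ)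
    (B : ℕ → Matrix (Fin n) (Fin m) ℝ) (k₁ k₀ : ℕ) :
    (Gr A B k₁ k₀)ᵀ = Gr A B k₁ k₀ := by
  unfold Gr
  rw [transpose_sum]
  refine Finset.sum_congr rfl fun j _ => ?_
  simp only [Matrix.transpose_mul, Matrix.transpose_transpose, Matrix.mul_assoc]


/-- Cancellation of the pseudoinverse against the reachability Gramian. -/
theorem stmt14 {n m N : ℕ} (hn : 0 < n) (hm : 0 < m) (hN : 0 < N)
    (A : ℕ → Matrix (Fin n) (Fin n) ℝ) (B : ℕ → Matrix (Fin n) (Fin m) ℝ)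
    -- `Gd k` is the Moore–Penrose inverse of `G_r(N,k)`
    (Gd : ℕ → Matrix (Fin n) (Fin n) ℝ)
    (hGd : ∀ k < N, IsMoorePenrose (Gr A B N k) (Gd k)) :
    ∀ k < N,
      B k * (B k)ᵀ * (Phi A N (k+1))ᵀ * Gd k * Gr A B N k
        = B k * (B k)ᵀ * (Phi A N (k+1))ᵀ := by
  intro k hk
  obtain ⟨h1, h2, h3, h4⟩ := hGd k hk
  set G := Gr A B N k with hG
  set P := Gd k * G with hP
  have hGsym : Gᵀ = G := Gr_transpose A B N k
  have hGP : G * P = G := by rw [hP, ← mul_assoc, h1]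
  have hPG : P * G = G := by
    have : (G * P)ᵀ = Gᵀ := congrArg transpose hGP
    rwa [transpose_mul, h4, hGsym] at this
  have hPsym : Pᵀ = P := h4
  -- the key vanishing sum
  set f : ℕ → Matrix (Fin n) (Fin m) ℝ :=
    fun j => (1 - P) * (Phi A N (j+1) * B j) with hf
  have hsum : ∑ j ∈ Finset.Ico k N, f j * (f j)ᵀ = 0 := by
    have : ∑ j ∈ Finset.Ico k N, f j * (f j)ᵀ = (1 - P) * G * (1 - P)ᵀ := by
      rw [hG]
      unfold Gr
      rw [Finset.mul_sum, Finset.sum_mul]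
      refine Finset.sum_congr rfl fun j _ => ?_
      simp only [hf, Matrix.transpose_mul, Matrix.transpose_sub, Matrix.transpose_one,
        hPsym, Matrix.mul_assoc]
    have hone : (1 - P)ᵀ = 1 - P := by rw [transpose_sub, transpose_one, hPsym]
    rw [this, hone, sub_mul, one_mul, hPG, sub_self, zero_mul]
  have hfk : f k = 0 :=
    sum_mul_transpose_eq_zero _ f hsum k (Finset.mem_Ico.mpr ⟨le_refl k, hk⟩)
  have hX : P * (Phi A N (k+1) * B k) = Phi A N (k+1) * B k := by
    have h0 : Phi A N (k+1) * B k - P * (Phi A N (k+1) * B k) = 0 := by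
      simpa [hf, Matrix.sub_mul] using hfk
    exact (sub_eq_zero.mp h0).symm
  have hXt : ((B k)ᵀ * (Phi A N (k+1))ᵀ) * P = (B k)ᵀ * (Phi A N (k+1))ᵀ := by
    have := congrArg transpose hX
    rwa [transpose_mul, transpose_mul, hPsym] at this
  rw [hP] at hXt
  simp only [Matrix.mul_assoc] at hXt ⊢
  rw [hXt]

end
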